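/- arXiv:2303.12703 — 2 statements merged into one kernel-verified Lean document; each statement's English description precedes it below -/
import Mathlib

section
/- Let D ≥ 1 and let A be a D × D real matrix with all entries nonnegative. Then trace(exp(A)) = D if and only if the support digraph of A contains no closed walk; that is, if and only if there is no k ≥ 1 and no sequence of indices i₀, i₁, …, i_k with i₀ = i_k and A i_l i_{l+1} > 0 for every 0 ≤ l < k. -/
/-! The series `trace (exp A) = ∑ₖ trace (A ^ k) / k!` has nonnegative terms and zeroth term
`D`, so `trace (exp A) = D` exactly when `trace (A ^ k) = 0` for all `k ≥ 1`. Expanding the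
matrix product, `(A ^ k) i j` is a sum of nonnegative weights of walks of length `k` from `i`
to `j`, so it is positive iff one of these walks uses only positive entries; in particular
`trace (A ^ k) > 0` iff the support digraph has a closed walk of length `k`. -/

open scoped Matrix Nat

theorem HasSum.eq_apply_zero_iff_of_nonneg {α : Type*} [AddCommGroup α] [PartialOrder α]
    [IsOrderedAddMonoid α] [TopologicalSpace α] [IsTopologicalAddGroup α]
    [OrderClosedTopology α] [T2Space α] {f : ℕ → α} {a : α} (hf : HasSum f a)
    (h : ∀ k, 0 ≤ f k) :
    a = f 0 ↔ ∀ k, f (k + 1) = 0 := by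
  have htail : HasSum (fun k => f (k + 1)) (a - f 0) := by
    simpa using (hasSum_nat_add_iff' 1).mpr hf
  calc a = f 0 ↔ HasSum (fun k => f (k + 1)) 0 := by
        rw [← sub_eq_zero]
        exact ⟨fun h0 => h0 ▸ htail, htail.unique⟩
    _ ↔ ∀ k, f (k + 1) = 0 := (hasSum_zero_iff_of_nonneg fun k => h (k + 1)).trans funext_iff

namespace Matrix

section Walks

variable {n R : Type*} [Fintype n] [DecidableEq n]
  [Semiring R] [LinearOrder R] [IsStrictOrderedRing R] {A : Matrix n n R}

theorem pow_apply_pos_iff_exists_walk (hA : ∀ i j, 0 ≤ A i j) (k : ℕ) (i j : n) :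
    0 < (A ^ k) i j ↔
      ∃ f : ℕ → n, f 0 = i ∧ f k = j ∧ ∀ l < k, 0 < A (f l) (f (l + 1)) := by
  induction k generalizing j with
  | zero =>
    rw [pow_zero, one_apply]
    constructor
    · intro h
      obtain rfl : i = j := by by_contra hij; simp [hij] at h
      exact ⟨fun _ => i, rfl, rfl, by simp⟩
    · rintro ⟨f, rfl, rfl, -⟩
      simp
  | succ k ih =>
    have hterm (m : n) : 0 < (A ^ k) i m * A m j ↔ 0 < (A ^ k) i m ∧ 0 < A m j :=
      ⟨fun h => ⟨(pow_apply_nonneg hA k i m).lt_of_ne (left_ne_zero_of_mul h.ne').symm,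
          (hA m j).lt_of_ne (right_ne_zero_of_mul h.ne').symm⟩,
        fun h => mul_pos h.1 h.2⟩
    rw [pow_succ, mul_apply,
      Finset.sum_pos_iff_of_nonneg fun m _ => mul_nonneg (pow_apply_nonneg hA k i m) (hA m j)]
    simp only [Finset.mem_univ, true_and, hterm, ih]
    constructor
    · rintro ⟨m, ⟨f, hf0, hfk, hf⟩, hmj⟩
      refine ⟨Function.update f (k + 1) j, by simp [hf0], by simp, fun l hl => ?_⟩
      rcases Nat.lt_succ_iff_lt_or_eq.mp hl with hl | rfl
      · simpa [Function.update_of_ne (by omega : l ≠ k + 1),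
          Function.update_of_ne (by omega : l + 1 ≠ k + 1)] using hf l hl
      · simpa [hfk] using hmj
    · rintro ⟨f, hf0, hfk, hf⟩
      exact ⟨f k, ⟨f, hf0, rfl, fun l hl => hf l (by omega)⟩, hfk ▸ hf k k.lt_succ_self⟩

theorem trace_pow_eq_zero_iff_not_exists_closed_walk (hA : ∀ i j, 0 ≤ A i j) (k : ℕ) :
    (A ^ k).trace = 0 ↔ ¬ ∃ f : ℕ → n, f 0 = f k ∧ ∀ l < k, 0 < A (f l) (f (l + 1)) := by
  have hdiag : (A ^ k).trace = 0 ↔ ∀ i, ¬ 0 < (A ^ k) i i := by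
    simp only [trace, diag_apply, funext_iff, Pi.zero_apply,
      Fintype.sum_eq_zero_iff_of_nonneg fun i => pow_apply_nonneg hA k i i]
    exact forall_congr' fun i =>
      (not_lt.trans (LE.le.ge_iff_eq' (pow_apply_nonneg hA k i i))).symm
  simp only [hdiag, pow_apply_pos_iff_exists_walk hA, not_exists, not_and]
  exact ⟨fun h f hf => h _ f rfl hf.symm, fun h i f h0 hk => h f (h0.trans hk.symm)⟩

end Walks

section Exp

attribute [local instance] Matrix.linftyOpNormedAddCommGroup Matrix.linftyOpNormedRing
  Matrix.linftyOpNormedAlgebra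

theorem hasSum_trace_exp {n 𝕂 : Type*} [Fintype n] [DecidableEq n] [RCLike 𝕂]
    (A : Matrix n n 𝕂) :
    HasSum (fun k => (k ! : 𝕂)⁻¹ * (A ^ k).trace) (NormedSpace.exp A).trace := by
  have h := (NormedSpace.exp_series_hasSum_exp' (𝕂 := 𝕂) A).map (traceAddMonoidHom n 𝕂)
    continuous_id.matrix_trace
  simp only [Function.comp_def, traceAddMonoidHom_apply, trace_smul, smul_eq_mul] at h
  -- `exact`, not `simpa`: the normed instance's topology is the product topology only up to
  -- unfolding.
  exact h

end Exp

end Matrix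

theorem trace_exp_eq_iff_no_closed_walk_general
    (D : ℕ) (A : Matrix (Fin D) (Fin D) ℝ)
    (hA : ∀ i j, 0 ≤ A i j) :
    (NormedSpace.exp A).trace = D ↔
      ¬ ∃ (k : ℕ) (i : ℕ → Fin D), 1 ≤ k ∧ i 0 = i k ∧
        ∀ l < k, 0 < A (i l) (i (l + 1)) := by
  have hterm_nonneg (k : ℕ) : 0 ≤ (k ! : ℝ)⁻¹ * (A ^ k).trace :=
    mul_nonneg (by positivity) (Finset.sum_nonneg fun i _ => Matrix.pow_apply_nonneg hA k i i)
  have hterm_zero : (0 ! : ℝ)⁻¹ * (A ^ 0).trace = D := by simp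
  rw [← hterm_zero, A.hasSum_trace_exp.eq_apply_zero_iff_of_nonneg hterm_nonneg]
  simp only [mul_eq_zero, inv_eq_zero, Nat.cast_eq_zero, Nat.factorial_ne_zero, false_or,
    Matrix.trace_pow_eq_zero_iff_not_exists_closed_walk hA]
  constructor
  · rintro h ⟨k, i, hk, hclosed, hwalk⟩
    obtain ⟨k, rfl⟩ := Nat.exists_eq_add_of_le' hk
    exact h k ⟨i, hclosed, hwalk⟩
  · rintro h k ⟨i, hclosed, hwalk⟩
    exact h ⟨k + 1, i, Nat.le_add_left 1 k, hclosed, hwalk⟩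

/-- For a `D × D` nonnegative real matrix `A`, `trace (exp A) = D` if and only if the
support digraph of `A` contains no closed walk. -/
theorem trace_exp_eq_iff_no_closed_walk
    (D : ℕ) (hD : 1 ≤ D) (A : Matrix (Fin D) (Fin D) ℝ)
    (hA : ∀ i j, 0 ≤ A i j) :
    (NormedSpace.exp A).trace = D ↔
      ¬ ∃ (k : ℕ) (i : ℕ → Fin D), 1 ≤ k ∧ i 0 = i k ∧
        ∀ l < k, 0 < A (i l) (i (l + 1)) :=
  trace_exp_eq_iff_no_closed_walk_general D A hA
end

section
/- Let (Ω, ℱ, P) be a probability space and let u₂, η₁, ε_i, ε_j, ε_k : Ω → ℝ be measurable random variables that are (jointly) independent as a family. Let f₂₁, f₁ᵢ, f₂ⱼ, f₂ₖ be real constants with f₂ⱼ ≠ 0. Define u₁ = f₂₁·u₂ + η₁, x_i = f₁ᵢ·u₁ + ε_i, x_j = f₂ⱼ·u₂ + ε_j, and x_k = f₂ₖ·u₂ + ε_k. Then, with g = f₁ᵢ·f₂₁ / f₂ⱼ, the random variable x_i − g·x_j is independent of x_k. -/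
/-! Since `g f₂ⱼ = f₁ᵢ f₂₁`, the common cause `u₂` cancels from `x_i - g x_j`, which is then a
function of `(η₁, ε_i, ε_j)` alone, while `x_k` is a function of `(u₂, ε_k)`: functions of
disjoint blocks of an independent family are independent. -/

open MeasureTheory ProbabilityTheory

namespace ProbabilityTheory

lemma iIndepFun.indepFun_comp_finset {Ω ι β γ δ : Type*} [MeasurableSpace Ω] {μ : Measure Ω}
    [MeasurableSpace β] [MeasurableSpace γ] [MeasurableSpace δ] {f : ι → Ω → β}
    (hf : iIndepFun f μ) (hf_meas : ∀ i, Measurable (f i)) {S T : Finset ι} (hST : Disjoint S T)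
    {φ : (S → β) → γ} {ψ : (T → β) → δ} (hφ : Measurable φ) (hψ : Measurable ψ) :
    IndepFun (fun ω ↦ φ fun i : S ↦ f i ω) (fun ω ↦ ψ fun i : T ↦ f i ω) μ :=
  (hf.indepFun_finset S T hST hf_meas).comp hφ hψ

end ProbabilityTheory

lemma triad_residual_eq {f₂₁ f₁i f₂j : ℝ} (hf₂j : f₂j ≠ 0) (u₂ η₁ εi εj : ℝ) :
    (f₁i * (f₂₁ * u₂ + η₁) + εi) - (f₁i * f₂₁ / f₂j) * (f₂j * u₂ + εj)
      = f₁i * η₁ + εi - (f₁i * f₂₁ / f₂j) * εj := by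
  field_simp
  ring

theorem triad_constraint_linear_general
    {Ω : Type*} [MeasurableSpace Ω] (P : Measure Ω)
    (u₂ η₁ εi εj εk : Ω → ℝ)
    (hu₂ : Measurable u₂) (hη₁ : Measurable η₁) (hεi : Measurable εi)
    (hεj : Measurable εj) (hεk : Measurable εk)
    (hindep : iIndepFun ![u₂, η₁, εi, εj, εk] P)
    (f₂₁ f₁i f₂j f₂k : ℝ) (hf₂j : f₂j ≠ 0) :
    IndepFun
      (fun ω => (f₁i * (f₂₁ * u₂ ω + η₁ ω) + εi ω)
        - (f₁i * f₂₁ / f₂j) * (f₂j * u₂ ω + εj ω))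
      (fun ω => f₂k * u₂ ω + εk ω) P := by
  have hmeas : ∀ i, Measurable (![u₂, η₁, εi, εj, εk] i) := by
    intro i
    fin_cases i <;> assumption
  simp only [triad_residual_eq hf₂j]
  exact hindep.indepFun_comp_finset hmeas (S := {1, 2, 3}) (T := {0, 4}) (by decide)
    (φ := fun v ↦ f₁i * v ⟨1, by decide⟩ + v ⟨2, by decide⟩ - (f₁i * f₂₁ / f₂j) * v ⟨3, by decide⟩)
    (ψ := fun v ↦ f₂k * v ⟨0, by decide⟩ + v ⟨4, by decide⟩) (by fun_prop) (by fun_prop)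

/-- In the linear SEM `u₁ = f₂₁ u₂ + η₁`, `x_i = f₁ᵢ u₁ + ε_i`, `x_j = f₂ⱼ u₂ + ε_j`,
`x_k = f₂ₖ u₂ + ε_k` with jointly independent `u₂, η₁, ε_i, ε_j, ε_k`, the residual
`x_i - (f₁ᵢ f₂₁ / f₂ⱼ) x_j` is independent of `x_k`. -/
theorem triad_constraint_linear
    {Ω : Type*} [MeasurableSpace Ω] (P : Measure Ω) [IsProbabilityMeasure P]
    (u₂ η₁ εi εj εk : Ω → ℝ)
    (hu₂ : Measurable u₂) (hη₁ : Measurable η₁) (hεi : Measurable εi)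
    (hεj : Measurable εj) (hεk : Measurable εk)
    (hindep : iIndepFun ![u₂, η₁, εi, εj, εk] P)
    (f₂₁ f₁i f₂j f₂k : ℝ) (hf₂j : f₂j ≠ 0) :
    IndepFun
      (fun ω => (f₁i * (f₂₁ * u₂ ω + η₁ ω) + εi ω)
        - (f₁i * f₂₁ / f₂j) * (f₂j * u₂ ω + εj ω))
      (fun ω => f₂k * u₂ ω + εk ω) P :=
  triad_constraint_linear_general P u₂ η₁ εi εj εk hu₂ hη₁ hεi hεj hεk hindep f₂₁ f₁i f₂j f₂k hf₂j
end
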